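/- arXiv:1606.02802 — 2 statements merged into one kernel-verified Lean document; each statement's English description precedes it below -/
import Mathlib

section
/- Assume lim_{n→∞} τ_i(n) = ∞ for each 1 ≤ i ≤ m and Σ_{i=1}^m p_i(n) < 1 for all n ≥ 0. Set α_i = liminf_{n→∞} Σ_{j=φ_i(n)}^{n−1} p_i(j) and α = min_{1≤i≤m} α_i. If 0 < α ≤ 1/e and for some r ∈ ℕ, limsup_{n→∞} Σ_{j=φ(n)}^{n} Σ_{i=1}^m p_i(j) a_r(φ(n), τ_i(j))^{−1} > 1 − (1 − α − √(1 − 2α − α²))/2, then every solution of (E_R) oscillates. -/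
/-!
Let `x` be an eventually positive solution. It is eventually nonincreasing, and keeping only the
delay `h = φ₀` gives `x (n + 1) ≤ x n - p₀ n * x (h n)`. Put `d = liminf x (n + 1) / x (h n)`.
For `a < α` and large `n`, let `m` be the first index at which `∑_{n+1}^{m} p₀` reaches `a`.
Summing the inequality over `[n + 1, m]`, bounding each `x (h j)` from below by telescoping back
from `n + 1` to `h j`, and using `x (m + 1) ≳ d * x (h m) ≥ d * x (n + 1)` gives
`a² / 2 * x (h n) ≲ (1 - a - d) * x (n + 1)`, hence `α² / 2 ≤ d (1 - α - d)`, which is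
`d ≥ (1 - α - √(1 - 2α - α²)) / 2`.
On the other hand, iterating the equation gives `x n ≤ a_r(n, k) x k`, so telescoping the
equation over `[φ n, n]` bounds the sum in the hypothesis by
`1 - x (n + 1) / x (φ n) ≤ 1 - x (n + 1) / x (h n)`, whose limsup is at most `1 - d`.
A negative solution is handled through `-x`.
-/

/-- `aR p τ r n k` is the quantity `a_{r+1}(n,k)` of the paper. -/
noncomputable def aR {m : ℕ} (p : Fin m → ℤ → ℝ) (τ : Fin m → ℤ → ℤ) : ℕ → ℤ → ℤ → ℝ
  | 0, n, k => ∏ i ∈ Finset.Ico k n, (1 - ∑ l : Fin m, p l i)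
  | r + 1, n, k => ∏ i ∈ Finset.Ico k n, (1 - ∑ l : Fin m, p l i * (aR p τ r i (τ l i))⁻¹)

/-- `φ_i(n) = max_{0 ≤ s ≤ n} τ_i(s)` (for `n ≥ 0`). -/
noncomputable def phii {m : ℕ} (τ : Fin m → ℤ → ℤ) (i : Fin m) (n : ℤ) : ℤ :=
  Finset.fold max (τ i 0) (τ i) (Finset.Icc 0 n)

/-- `φ(n) = max_{1 ≤ i ≤ m} φ_i(n)`. -/
noncomputable def phi {m : ℕ} [NeZero m] (τ : Fin m → ℤ → ℤ) (n : ℤ) : ℤ :=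
  Finset.univ.sup' Finset.univ_nonempty (fun i => phii τ i n)

open Filter Finset Topology

theorem sum_Ico_sub_add_one {G : Type*} [AddCommGroup G] (u : ℤ → G) {a b : ℤ} (hab : a ≤ b) :
    ∑ i ∈ Ico a b, (u i - u (i + 1)) = u a - u b := by
  induction b, hab using Int.leInduction with
  | base => simp
  | succ b hab ih =>
    rw [← insert_Ico_right_eq_Ico_add_one hab, sum_insert (by simp), ih]
    abel

theorem sum_Ico_mul_le_sub {x q y : ℤ → ℝ} {a b : ℤ} (hab : a ≤ b)
    (h : ∀ i ∈ Ico a b, x (i + 1) ≤ x i - q i * y i) :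
    ∑ i ∈ Ico a b, q i * y i ≤ x a - x b :=
  (sum_le_sum fun i hi => by linarith [h i hi]).trans_eq (sum_Ico_sub_add_one x hab)

theorem sum_Ico_add_sum_Ico {M : Type*} [AddCommMonoid M] (f : ℤ → M) {a b c : ℤ}
    (hab : a ≤ b) (hbc : b ≤ c) :
    ∑ i ∈ Ico a b, f i + ∑ i ∈ Ico b c, f i = ∑ i ∈ Ico a c, f i := by
  rw [← sum_union (Ico_disjoint_Ico_consecutive a b c), Ico_union_Ico_eq_Ico hab hbc]

theorem le_prod_Ico_mul {u c : ℤ → ℝ} {k n : ℤ} (hkn : k ≤ n) (hu : ∀ i ∈ Icc k n, 0 < u i)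
    (hc : ∀ i ∈ Ico k n, u (i + 1) ≤ c i * u i) : u n ≤ (∏ i ∈ Ico k n, c i) * u k := by
  induction n, hkn using Int.leInduction with
  | base => simp
  | succ n hkn ih =>
    have hcn : 0 ≤ c n := (pos_of_mul_pos_left ((hu (n + 1) (by simp; omega)).trans_le
      (hc n (by simp; omega))) (hu n (by simp; omega)).le).le
    rw [← insert_Ico_right_eq_Ico_add_one hkn, prod_insert (by simp)]
    calc u (n + 1) ≤ c n * u n := hc n (by simp; omega)
      _ ≤ c n * ((∏ i ∈ Ico k n, c i) * u k) :=
        mul_le_mul_of_nonneg_left (ih (fun i hi => hu i (by simp at hi ⊢; omega))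
          (fun i hi => hc i (by simp at hi ⊢; omega))) hcn
      _ = _ := by ring

theorem lt_of_sum_Ico_lt_sum_Ico {q : ℤ → ℝ} {s t m : ℤ} (hq : ∀ i ∈ Ico s m, 0 ≤ q i)
    (h : ∑ i ∈ Ico s m, q i < ∑ i ∈ Ico t m, q i) : t < s := by
  by_contra! hst
  exact h.not_ge (sum_le_sum_of_subset_of_nonneg (Ico_subset_Ico_left hst) fun i hi _ => hq i hi)

theorem exists_sum_Ico_lt_le_sum_Icc {q : ℤ → ℝ} {s : ℤ} {a : ℝ} (ha : 0 < a)
    (h : ∃ t, a ≤ ∑ i ∈ Icc s t, q i) :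
    ∃ m, s ≤ m ∧ ∑ i ∈ Ico s m, q i < a ∧ a ≤ ∑ i ∈ Icc s m, q i := by
  have hbdd : ∀ t, a ≤ ∑ i ∈ Icc s t, q i → s ≤ t := fun t ht => by
    by_contra! hts
    rw [Icc_eq_empty_of_lt hts, sum_empty] at ht
    linarith
  obtain ⟨m, hm, hmin⟩ := Int.exists_least_of_bdd ⟨s, hbdd⟩ h
  refine ⟨m, hbdd m hm, ?_, hm⟩
  rw [← Icc_sub_one_right_eq_Ico]
  by_contra! h'
  linarith [hmin _ h']

theorem sq_div_two_le_sum_mul_sub {q : ℤ → ℝ} {s t : ℤ} {a : ℝ} (hst : s ≤ t)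
    (hlt : ∑ i ∈ Ico s t, q i < a) (hle : a ≤ ∑ i ∈ Icc s t, q i) :
    a ^ 2 / 2 ≤ ∑ j ∈ Icc s t, q j * (a - ∑ i ∈ Ico s j, q i) := by
  set ρ : ℤ → ℝ := fun j => ∑ i ∈ Ico s j, q i
  -- `q j (a - ρ j)` dominates the decrement of `(a - ρ j)² / 2`, since `ρ (j + 1) = ρ j + q j`
  have hstep : ∀ j ∈ Ico s t,
      (a - ρ j) ^ 2 / 2 - (a - ρ (j + 1)) ^ 2 / 2 ≤ q j * (a - ρ j) := fun j hj => by
    have : ρ (j + 1) = ρ j + q j := by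
      simp only [ρ]
      rw [← insert_Ico_right_eq_Ico_add_one (mem_Ico.1 hj).1, sum_insert (by simp), add_comm]
    rw [this]
    nlinarith [sq_nonneg (q j)]
  have htel := (sum_Ico_sub_add_one (fun j => (a - ρ j) ^ 2 / 2) hst).symm.trans_le
    (sum_le_sum hstep)
  have hlast : q t = ∑ i ∈ Icc s t, q i - ρ t := by
    simp only [ρ]
    rw [← Ico_insert_right hst, sum_insert (by simp), add_sub_cancel_right]
  rw [← Ico_insert_right hst, sum_insert (by simp)]
  simp only [ρ, Ico_self, sum_empty] at htel ⊢
  nlinarith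

theorem half_sub_sqrt_le {α d : ℝ} (h : α ^ 2 / 2 ≤ d * (1 - α - d)) :
    (1 - α - √(1 - 2 * α - α ^ 2)) / 2 ≤ d := by
  have := Real.abs_le_sqrt (x := 2 * d - (1 - α)) (y := 1 - 2 * α - α ^ 2) (by nlinarith)
  linarith [neg_abs_le (2 * d - (1 - α))]

theorem limsup_le_sub_liminf {ι : Type*} {l : Filter ι} {u v : ι → ℝ} {c : ℝ}
    (hu : IsCoboundedUnder (· ≤ ·) l u) (hv : IsBoundedUnder (· ≥ ·) l v)
    (huv : ∀ᶠ i in l, u i ≤ c - v i) : limsup u l ≤ c - liminf v l := by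
  rw [le_sub_comm]
  refine le_of_forall_lt_imp_le_of_dense fun b hb => le_sub_comm.1 (limsup_le_of_le hu ?_)
  filter_upwards [huv, eventually_lt_of_lt_liminf hb hv] with i h1 h2
  linarith

section SingleDelay

variable {x q : ℤ → ℝ} {h : ℤ → ℤ}

theorem add_sq_mul_le_sub_of_first_crossing {N R n m : ℤ} {a : ℝ} (hNR : N ≤ R)
    (hpos : ∀ i ≥ N, 0 < x i) (hanti : AntitoneOn x (Set.Ici N)) (hq : ∀ i ≥ R, 0 ≤ q i)
    (hstep : ∀ i ≥ R, x (i + 1) ≤ x i - q i * x (h i)) (hh : Monotone h)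
    (hhR : ∀ i ≥ R, N ≤ h i) (hwin : ∀ j ≥ R, a < ∑ i ∈ Ico (h j) j, q i)
    (hRn : R ≤ h (n + 1)) (hnm : n + 1 ≤ m) (hhm : h m ≤ n)
    (hm_lt : ∑ i ∈ Ico (n + 1) m, q i < a) (hm_le : a ≤ ∑ i ∈ Icc (n + 1) m, q i) :
    a * x (n + 1) + a ^ 2 / 2 * x (h n) ≤ x (n + 1) - x (m + 1) := by
  have hRn' : R ≤ n := hRn.trans ((hh hnm).trans hhm)
  have hxn : 0 < x (n + 1) := hpos _ (by omega)
  have hxhn : 0 < x (h n) := hpos _ (hhR n hRn')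
  have hdelay : ∀ j ∈ Icc (n + 1) m,
      x (n + 1) + (a - ∑ i ∈ Ico (n + 1) j, q i) * x (h n) ≤ x (h j) := by
    intro j hj
    obtain ⟨hj1, hj2⟩ := mem_Icc.1 hj
    have hRj : R ≤ h j := hRn.trans (hh hj1)
    have hjn : h j ≤ n := (hh hj2).trans hhm
    have htel := sum_Ico_mul_le_sub (y := fun i => x (h i)) (by omega : h j ≤ n + 1)
      fun i hi => hstep i (by simp at hi; omega)
    have hlow : (∑ i ∈ Ico (h j) (n + 1), q i) * x (h n)
        ≤ ∑ i ∈ Ico (h j) (n + 1), q i * x (h i) := by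
      rw [sum_mul]
      refine sum_le_sum fun i hi => mul_le_mul_of_nonneg_left ?_ (hq i (by simp at hi; omega))
      simp only [mem_Ico] at hi
      exact hanti (hhR i (by omega)) (hhR n hRn') (hh (by omega))
    have hcoef : a - ∑ i ∈ Ico (n + 1) j, q i ≤ ∑ i ∈ Ico (h j) (n + 1), q i := by
      linarith [sum_Ico_add_sum_Ico q (by omega : h j ≤ n + 1) hj1, hwin j (by omega)]
    nlinarith [mul_le_mul_of_nonneg_right hcoef hxhn.le]
  have htel := sum_Ico_mul_le_sub (y := fun i => x (h i)) (by omega : n + 1 ≤ m + 1)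
    fun i hi => hstep i (by simp at hi; omega)
  rw [Ico_add_one_right_eq_Icc] at htel
  have hsum := sum_le_sum fun j hj =>
    mul_le_mul_of_nonneg_left (hdelay j hj) (hq j (by simp at hj; omega))
  simp only [mul_add, sum_add_distrib, ← mul_assoc, ← sum_mul] at hsum
  have hmass := sq_div_two_le_sum_mul_sub (by omega) hm_lt hm_le
  nlinarith [mul_le_mul_of_nonneg_right hm_le hxn.le, mul_le_mul_of_nonneg_right hmass hxhn.le]

theorem eventually_sq_mul_le_of_lt_ratio (hpos : ∀ᶠ n in atTop, 0 < x n)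
    (hanti : ∀ᶠ N in atTop, AntitoneOn x (Set.Ici N)) (hq : ∀ᶠ n in atTop, 0 ≤ q n)
    (hstep : ∀ᶠ n in atTop, x (n + 1) ≤ x n - q n * x (h n)) (hh : Monotone h)
    (hh_top : Tendsto h atTop atTop) {a c : ℝ} (ha : 0 < a)
    (hwin : ∀ᶠ n in atTop, a < ∑ i ∈ Ico (h n) n, q i)
    (hc : ∀ᶠ n in atTop, c < x (n + 1) / x (h n)) :
    ∀ᶠ n in atTop, a ^ 2 / 2 * x (h n) ≤ (1 - a - c) * x (n + 1) := by
  obtain ⟨N, hposN, hantiN⟩ := ((eventually_forall_ge_atTop.2 hpos).and hanti).exists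
  obtain ⟨R, hNR, hR⟩ := ((eventually_ge_atTop N).and (eventually_forall_ge_atTop.2
    ((hh_top.eventually_ge_atTop N).and (hq.and (hstep.and (hwin.and hc)))))).exists
  have hhR : ∀ i ≥ R, N ≤ h i := fun i hi => (hR i hi).1
  have hqR : ∀ i ≥ R, 0 ≤ q i := fun i hi => (hR i hi).2.1
  have hstepR : ∀ i ≥ R, x (i + 1) ≤ x i - q i * x (h i) := fun i hi => (hR i hi).2.2.1
  have hwinR : ∀ i ≥ R, a < ∑ j ∈ Ico (h i) i, q j := fun i hi => (hR i hi).2.2.2.1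
  have hcR : ∀ i ≥ R, c < x (i + 1) / x (h i) := fun i hi => (hR i hi).2.2.2.2
  filter_upwards [eventually_ge_atTop R, hh_top.eventually_ge_atTop R] with n hRn hRhn
  obtain ⟨m, hnm, hm_lt, hm_le⟩ : ∃ m, n + 1 ≤ m ∧ ∑ i ∈ Ico (n + 1) m, q i < a ∧
      a ≤ ∑ i ∈ Icc (n + 1) m, q i := by
    refine exists_sum_Ico_lt_le_sum_Icc ha ?_
    obtain ⟨t, hRt, hnt⟩ :=
      ((eventually_ge_atTop R).and (hh_top.eventually_ge_atTop (n + 1))).exists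
    refine ⟨t, (hwinR t hRt).le.trans (sum_le_sum_of_subset_of_nonneg ?_ fun i hi _ => ?_)⟩
    · intro i hi
      simp only [mem_Ico, mem_Icc] at hi ⊢
      omega
    · exact hqR i (by simp at hi; omega)
  have hhm : h m ≤ n := by
    have := lt_of_sum_Ico_lt_sum_Ico (fun i hi => hqR i (by simp at hi; omega))
      (hm_lt.trans (hwinR m (by omega)))
    omega
  have hcore := add_sq_mul_le_sub_of_first_crossing hNR hposN hantiN hqR hstepR hh hhR hwinR
    (hRhn.trans (hh (by omega))) hnm hhm hm_lt hm_le
  have hxn : 0 < x (n + 1) := hposN _ (by omega)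
  have hxhm : x (n + 1) ≤ x (h m) := hantiN (hhR m (by omega)) (by simp; omega) (by omega)
  have hratio := hcR m (by omega)
  rw [lt_div_iff₀ (hxn.trans_le hxhm)] at hratio
  have hxm : c * x (n + 1) ≤ x (m + 1) := by
    rcases le_or_gt c 0 with hc0 | hc0
    · nlinarith [hposN (m + 1) (by omega)]
    · nlinarith
  linarith

theorem half_sub_sqrt_le_liminf_ratio (hpos : ∀ᶠ n in atTop, 0 < x n)
    (hanti : ∀ᶠ N in atTop, AntitoneOn x (Set.Ici N)) (hq : ∀ᶠ n in atTop, 0 ≤ q n)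
    (hstep : ∀ᶠ n in atTop, x (n + 1) ≤ x n - q n * x (h n)) (hh : Monotone h)
    (hh_top : Tendsto h atTop atTop) {α : ℝ} (hα : 0 < α)
    (hwin : ∀ a < α, ∀ᶠ n in atTop, a < ∑ i ∈ Ico (h n) n, q i) :
    (1 - α - √(1 - 2 * α - α ^ 2)) / 2 ≤ liminf (fun n => x (n + 1) / x (h n)) atTop := by
  set d := liminf (fun n => x (n + 1) / x (h n)) atTop
  have hh_lt : ∀ᶠ n in atTop, h n < n := (hwin (α / 2) (by linarith)).mono fun n hn => by
    by_contra! hle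
    rw [Ico_eq_empty_of_le hle, sum_empty] at hn
    linarith
  have hpos_h := hh_top.eventually hpos
  have hpos_succ : ∀ᶠ n in atTop, 0 < x (n + 1) := by
    filter_upwards [eventually_forall_ge_atTop.2 hpos] with n hn using hn _ (by omega)
  have hbdd : IsBoundedUnder (· ≥ ·) atTop fun n => x (n + 1) / x (h n) :=
    isBoundedUnder_of_eventually_ge <| by
      filter_upwards [hpos_h, hpos_succ] with n h1 h2 using (div_pos h2 h1).le
  have hcobdd : IsCoboundedUnder (· ≥ ·) atTop fun n => x (n + 1) / x (h n) :=
    isCoboundedUnder_ge_of_eventually_le (x := 1) atTop <| by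
      obtain ⟨N, hN⟩ := hanti.exists
      filter_upwards [hpos_h, hh_lt, hh_top.eventually_ge_atTop N] with n h1 h2 h3
      rw [div_le_one h1]
      exact hN h3 (by simp; omega) (by omega)
  have key : ∀ a ∈ Set.Ioo 0 α, 0 ≤ d * (1 + α - 2 * a - d) - a ^ 2 / 2 := by
    rintro a ⟨ha0, haα⟩
    -- the lower bound `c = d - (α - a)` lets `a → α` and `c → d` be one limit
    have hc := eventually_lt_of_lt_liminf (by linarith : d - (α - a) < d) hbdd
    have hmain := eventually_sq_mul_le_of_lt_ratio hpos hanti hq hstep hh hh_top ha0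
      (hwin a haα) hc
    have hcoef : 0 < 1 + α - 2 * a - d := by
      obtain ⟨n, hn, hxh, hxn⟩ := (hmain.and (hpos_h.and hpos_succ)).exists
      by_contra! hle
      nlinarith [mul_pos (pow_pos ha0 2) hxh]
    have hK : a ^ 2 / 2 / (1 + α - 2 * a - d) ≤ d := le_liminf_of_le hcobdd <| by
      filter_upwards [hmain, hpos_h] with n hn hxh
      rw [div_le_div_iff₀ hcoef hxh]
      linarith
    rw [div_le_iff₀ hcoef] at hK
    linarith
  have hlim : Tendsto (fun a => d * (1 + α - 2 * a - d) - a ^ 2 / 2) (𝓝[<] α)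
      (𝓝 (d * (1 + α - 2 * α - d) - α ^ 2 / 2)) :=
    ((by fun_prop : Continuous fun a : ℝ => d * (1 + α - 2 * a - d) - a ^ 2 / 2).tendsto
      α).mono_left nhdsWithin_le_nhds
  have := ge_of_tendsto hlim (mem_of_superset (Ioo_mem_nhdsLT hα) key)
  exact half_sub_sqrt_le (by linarith)

end SingleDelay

section Delays

variable {m : ℕ} (τ : Fin m → ℤ → ℤ) (i : Fin m)

theorem le_phii {s n : ℤ} (hs : 0 ≤ s) (hsn : s ≤ n) : τ i s ≤ phii τ i n :=
  (le_fold_max _).2 (Or.inr ⟨s, mem_Icc.2 ⟨hs, hsn⟩, le_rfl⟩)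

theorem monotone_phii : Monotone (phii τ i) := fun _ _ hab =>
  (fold_max_le _).2 ⟨(le_fold_max _).2 (Or.inl le_rfl), fun _ hs =>
    le_phii τ i (mem_Icc.1 hs).1 ((mem_Icc.1 hs).2.trans hab)⟩

theorem phii_le_sub_one (hτ : ∀ n, 0 ≤ n → τ i n ≤ n - 1) {n : ℤ} (hn : 0 ≤ n) :
    phii τ i n ≤ n - 1 :=
  (fold_max_le _).2 ⟨(hτ 0 le_rfl).trans (by omega), fun s hs =>
    (hτ s (mem_Icc.1 hs).1).trans (by linarith [(mem_Icc.1 hs).2])⟩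

theorem tendsto_phii_atTop (hτ : Tendsto (τ i) atTop atTop) : Tendsto (phii τ i) atTop atTop :=
  tendsto_atTop_mono' _ ((eventually_ge_atTop 0).mono fun _ hn => le_phii τ i hn le_rfl) hτ

variable [NeZero m]

theorem phii_le_phi (n : ℤ) : phii τ i n ≤ phi τ n :=
  le_sup' (fun i => phii τ i n) (mem_univ i)

theorem phi_le_sub_one (hτ : ∀ i n, 0 ≤ n → τ i n ≤ n - 1) {n : ℤ} (hn : 0 ≤ n) :
    phi τ n ≤ n - 1 :=
  sup'_le _ _ fun i _ => phii_le_sub_one τ i (hτ i) hn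

theorem tendsto_phi_atTop (hτ : Tendsto (τ 0) atTop atTop) : Tendsto (phi τ) atTop atTop :=
  tendsto_atTop_mono (phii_le_phi τ 0) (tendsto_phii_atTop τ 0 hτ)

end Delays

section RetardedEquation

variable {m : ℕ} {p : Fin m → ℤ → ℝ} {τ : Fin m → ℤ → ℤ} {x : ℤ → ℝ}

theorem succ_le_one_sub_sum_mul {n : ℤ} (hp : ∀ l, 0 ≤ p l n)
    (hxeq : x (n + 1) - x n + ∑ l, p l n * x (τ l n) = 0) {c : Fin m → ℝ}
    (hc : ∀ l, c l * x n ≤ x (τ l n)) : x (n + 1) ≤ (1 - ∑ l, p l n * c l) * x n := by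
  have : ∑ l, p l n * c l * x n ≤ ∑ l, p l n * x (τ l n) :=
    sum_le_sum fun l _ => by rw [mul_assoc]; exact mul_le_mul_of_nonneg_left (hc l) (hp l)
  rw [← sum_mul] at this
  linarith

theorem eventually_antitoneOn (hp : ∀ i n, 0 ≤ n → 0 ≤ p i n)
    (hτlim : ∀ i, Tendsto (τ i) atTop atTop)
    (hxeq : ∀ n, 0 ≤ n → x (n + 1) - x n + ∑ i, p i n * x (τ i n) = 0)
    (hpos : ∀ᶠ n in atTop, 0 < x n) : ∀ᶠ N in atTop, AntitoneOn x (Set.Ici N) := by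
  have hτpos : ∀ᶠ n in atTop, ∀ i, 0 < x (τ i n) :=
    eventually_all.2 fun i => (hτlim i).eventually hpos
  filter_upwards [eventually_forall_ge_atTop.2 (hτpos.and (eventually_ge_atTop 0))] with N hN
  refine antitoneOn_of_add_one_le Set.ordConnected_Ici fun n _ hn _ => ?_
  obtain ⟨hxτ, hn0⟩ := hN n hn
  have := sum_nonneg fun i (_ : i ∈ univ) => mul_nonneg (hp i n hn0) (hxτ i).le
  linarith [hxeq n hn0]

theorem eventually_succ_le_sub_mul_phii (hp : ∀ i n, 0 ≤ n → 0 ≤ p i n)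
    (hτlim : ∀ i, Tendsto (τ i) atTop atTop)
    (hxeq : ∀ n, 0 ≤ n → x (n + 1) - x n + ∑ i, p i n * x (τ i n) = 0)
    (hpos : ∀ᶠ n in atTop, 0 < x n) (hanti : ∀ᶠ N in atTop, AntitoneOn x (Set.Ici N))
    (i : Fin m) : ∀ᶠ n in atTop, x (n + 1) ≤ x n - p i n * x (phii τ i n) := by
  obtain ⟨N, hN⟩ := hanti.exists
  filter_upwards [eventually_ge_atTop 0, eventually_all.2 fun l => (hτlim l).eventually hpos,
    (hτlim i).eventually_ge_atTop N] with n hn hxτ hτN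
  have hsingle : p i n * x (τ i n) ≤ ∑ l, p l n * x (τ l n) :=
    single_le_sum (f := fun l => p l n * x (τ l n))
      (fun l _ => mul_nonneg (hp l n hn) (hxτ l).le) (mem_univ i)
  have hτφ := le_phii τ i hn le_rfl
  have hmono : x (phii τ i n) ≤ x (τ i n) := hN hτN (hτN.trans hτφ) hτφ
  nlinarith [mul_le_mul_of_nonneg_left hmono (hp i n hn), hxeq n hn]

theorem le_prod_mul_of_le_delay (hp : ∀ i n, 0 ≤ n → 0 ≤ p i n)
    (hxeq : ∀ n, 0 ≤ n → x (n + 1) - x n + ∑ i, p i n * x (τ i n) = 0)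
    {K : ℤ} (hK : 0 ≤ K) (hpos : ∀ n ≥ K, 0 < x n) (c : Fin m → ℤ → ℝ)
    (hc : ∀ j ≥ K, ∀ l, c l j * x j ≤ x (τ l j)) {k n : ℤ} (hk : K ≤ k) (hkn : k ≤ n) :
    x n ≤ (∏ j ∈ Ico k n, (1 - ∑ l, p l j * c l j)) * x k :=
  le_prod_Ico_mul hkn (fun j hj => hpos j (by simp at hj; omega)) fun j hj =>
    have hj : K ≤ j := hk.trans (mem_Ico.1 hj).1
    succ_le_one_sub_sum_mul (fun l => hp l j (hK.trans hj)) (hxeq j (hK.trans hj)) (hc j hj)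

theorem eventually_le_aR_mul (hp : ∀ i n, 0 ≤ n → 0 ≤ p i n)
    (hτ : ∀ i n, 0 ≤ n → τ i n ≤ n - 1) (hτlim : ∀ i, Tendsto (τ i) atTop atTop)
    (hxeq : ∀ n, 0 ≤ n → x (n + 1) - x n + ∑ i, p i n * x (τ i n) = 0)
    (hpos : ∀ᶠ n in atTop, 0 < x n) (hanti : ∀ᶠ N in atTop, AntitoneOn x (Set.Ici N))
    (r : ℕ) : ∀ᶠ k in atTop, ∀ n ≥ k, x n ≤ aR p τ r n k * x k := by
  obtain ⟨K, hK0, hposK⟩ :=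
    ((eventually_ge_atTop 0).and (eventually_forall_ge_atTop.2 hpos)).exists
  have hτ_ge (M : ℤ) : ∃ K', max M K ≤ K' ∧ ∀ j ≥ K', ∀ l, M ≤ τ l j :=
    ((eventually_ge_atTop _).and (eventually_forall_ge_atTop.2
      (eventually_all.2 fun l => (hτlim l).eventually_ge_atTop M))).exists
  induction r with
  | zero =>
    obtain ⟨N, hN⟩ := hanti.exists
    obtain ⟨K', hK'le, hK'⟩ := hτ_ge N
    filter_upwards [eventually_ge_atTop K'] with k hk n hn
    have := le_prod_mul_of_le_delay hp hxeq (by omega) (fun n hn => hposK n (by omega))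
      (fun _ _ => 1) (fun j hj l => by
        rw [one_mul]
        have := hτ l j (by omega)
        exact hN (hK' j hj l) (by simp; omega) (by omega)) hk hn
    simpa [aR] using this
  | succ r ih =>
    obtain ⟨M, hM⟩ := eventually_atTop.1 ih
    obtain ⟨K', hK'le, hK'⟩ := hτ_ge (max M K)
    filter_upwards [eventually_ge_atTop K'] with k hk n hn
    refine le_prod_mul_of_le_delay hp hxeq (by omega) (fun n hn => hposK n (by omega))
      (fun l j => (aR p τ r j (τ l j))⁻¹) (fun j hj l => ?_) hk hn
    have hτj := hK' j hj l
    have hrec := hM (τ l j) (by omega) j (by linarith [hτ l j (by omega)])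
    have haR := pos_of_mul_pos_left ((hposK j (by omega)).trans_le hrec)
      (hposK _ (by omega)).le
    rwa [inv_mul_le_iff₀ haR]

theorem eventually_sum_le_one_sub_div [NeZero m] (hp : ∀ i n, 0 ≤ n → 0 ≤ p i n)
    (hτ : ∀ i n, 0 ≤ n → τ i n ≤ n - 1) (hτlim : ∀ i, Tendsto (τ i) atTop atTop)
    (hxeq : ∀ n, 0 ≤ n → x (n + 1) - x n + ∑ i, p i n * x (τ i n) = 0)
    (hpos : ∀ᶠ n in atTop, 0 < x n) (hanti : ∀ᶠ N in atTop, AntitoneOn x (Set.Ici N))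
    (r : ℕ) : ∀ᶠ n in atTop,
      0 ≤ ∑ j ∈ Icc (phi τ n) n, ∑ i, p i j * (aR p τ r (phi τ n) (τ i j))⁻¹ ∧
      ∑ j ∈ Icc (phi τ n) n, ∑ i, p i j * (aR p τ r (phi τ n) (τ i j))⁻¹
        ≤ 1 - x (n + 1) / x (phi τ n) := by
  obtain ⟨M, hM⟩ := eventually_atTop.1 (eventually_le_aR_mul hp hτ hτlim hxeq hpos hanti r)
  obtain ⟨K, hK0, hposK⟩ :=
    ((eventually_ge_atTop 0).and (eventually_forall_ge_atTop.2 hpos)).exists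
  obtain ⟨T, hKT, hT⟩ := ((eventually_ge_atTop K).and (eventually_forall_ge_atTop.2
    (eventually_all.2 fun i => (hτlim i).eventually_ge_atTop (max M K)))).exists
  filter_upwards [(tendsto_phi_atTop τ (hτlim 0)).eventually_ge_atTop T, eventually_ge_atTop 0]
    with n hTφ hn
  have hφn := phi_le_sub_one τ hτ hn
  have hxφ : 0 < x (phi τ n) := hposK _ (by omega)
  have hterm : ∀ j ∈ Icc (phi τ n) n, ∀ i, 0 ≤ p i j * (aR p τ r (phi τ n) (τ i j))⁻¹ ∧
      p i j * (aR p τ r (phi τ n) (τ i j))⁻¹ ≤ p i j * x (τ i j) / x (phi τ n) := by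
    intro j hj i
    obtain ⟨hj1, hj2⟩ := mem_Icc.1 hj
    have hτM := hT j (by omega) i
    have hτφ : τ i j ≤ phi τ n :=
      (le_phii τ i (by omega) le_rfl).trans ((monotone_phii τ i hj2).trans (phii_le_phi τ i n))
    have hrec := hM (τ i j) (by omega) (phi τ n) hτφ
    have hxτ := hposK (τ i j) (by omega)
    have haR := pos_of_mul_pos_left (hxφ.trans_le hrec) hxτ.le
    have hpij := hp i j (by omega)
    refine ⟨mul_nonneg hpij (inv_nonneg.2 haR.le), ?_⟩
    rw [mul_div_assoc]
    refine mul_le_mul_of_nonneg_left ?_ hpij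
    rw [inv_eq_one_div, div_le_div_iff₀ haR hxφ]
    linarith
  have htel : ∑ j ∈ Icc (phi τ n) n, ∑ i, p i j * x (τ i j) = x (phi τ n) - x (n + 1) := by
    rw [← Ico_add_one_right_eq_Icc, ← sum_Ico_sub_add_one x (by omega : phi τ n ≤ n + 1)]
    exact sum_congr rfl fun j hj => by linarith [hxeq j (by simp at hj; omega)]
  refine ⟨sum_nonneg fun j hj => sum_nonneg fun i _ => (hterm j hj i).1, ?_⟩
  calc _ ≤ ∑ j ∈ Icc (phi τ n) n, ∑ i, p i j * x (τ i j) / x (phi τ n) :=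
        sum_le_sum fun j hj => sum_le_sum fun i _ => (hterm j hj i).2
    _ = (x (phi τ n) - x (n + 1)) / x (phi τ n) := by simp only [← sum_div, htel]
    _ = 1 - x (n + 1) / x (phi τ n) := by field_simp

theorem not_eventually_pos [NeZero m] (hp : ∀ i n, 0 ≤ n → 0 ≤ p i n)
    (hτ : ∀ i n, 0 ≤ n → τ i n ≤ n - 1) (hτlim : ∀ i, Tendsto (τ i) atTop atTop) {α : ℝ}
    (hα : α = univ.inf' univ_nonempty fun i : Fin m =>
      liminf (fun n : ℤ => ∑ j ∈ Ico (phii τ i n) n, p i j) atTop)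
    (hα0 : 0 < α) {r : ℕ}
    (hcond : 1 - (1 - α - √(1 - 2 * α - α ^ 2)) / 2 < limsup (fun n : ℤ =>
      ∑ j ∈ Icc (phi τ n) n, ∑ i, p i j * (aR p τ r (phi τ n) (τ i j))⁻¹) atTop)
    (hxeq : ∀ n, 0 ≤ n → x (n + 1) - x n + ∑ i, p i n * x (τ i n) = 0) :
    ¬ ∀ᶠ n in atTop, 0 < x n := by
  intro hpos
  have hanti := eventually_antitoneOn hp hτlim hxeq hpos
  have hφ₀ := tendsto_phii_atTop τ 0 (hτlim 0)
  have hαle : α ≤ liminf (fun n : ℤ => ∑ j ∈ Ico (phii τ 0 n) n, p 0 j) atTop :=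
    hα ▸ inf'_le _ (mem_univ 0)
  have hwin (a : ℝ) (ha : a < α) : ∀ᶠ n in atTop, a < ∑ j ∈ Ico (phii τ 0 n) n, p 0 j :=
    eventually_lt_of_lt_liminf (ha.trans_le hαle) <| isBoundedUnder_of_eventually_ge <|
      (hφ₀.eventually_ge_atTop 0).mono fun n hn =>
        sum_nonneg fun j hj => hp 0 j (by simp at hj; omega)
  have hd := half_sub_sqrt_le_liminf_ratio hpos hanti
    ((eventually_ge_atTop 0).mono fun n => hp 0 n)
    (eventually_succ_le_sub_mul_phii hp hτlim hxeq hpos hanti 0) (monotone_phii τ 0) hφ₀ hα0 hwin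
  set S := fun n : ℤ => ∑ j ∈ Icc (phi τ n) n, ∑ i, p i j * (aR p τ r (phi τ n) (τ i j))⁻¹
  have hS : ∀ᶠ n in atTop, 0 ≤ S n ∧ S n ≤ 1 - x (n + 1) / x (phi τ n) :=
    eventually_sum_le_one_sub_div hp hτ hτlim hxeq hpos hanti r
  obtain ⟨N, hN⟩ := hanti.exists
  have hpos_succ : ∀ᶠ n in atTop, 0 < x (n + 1) := by
    filter_upwards [eventually_forall_ge_atTop.2 hpos] with n hn using hn _ (by omega)
  have hS_le : ∀ᶠ n in atTop, S n ≤ 1 - x (n + 1) / x (phii τ 0 n) := by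
    filter_upwards [hS, hφ₀.eventually_ge_atTop N,
      (tendsto_phi_atTop τ (hτlim 0)).eventually hpos, hpos_succ] with n hSn hNφ hxφ hxn
    have hmono : x (phi τ n) ≤ x (phii τ 0 n) :=
      hN hNφ (hNφ.trans (phii_le_phi τ 0 n)) (phii_le_phi τ 0 n)
    linarith [hSn.2, div_le_div_of_nonneg_left hxn.le hxφ hmono]
  have hlim := limsup_le_sub_liminf
    (isCoboundedUnder_le_of_eventually_le atTop (hS.mono fun n h => h.1))
    (isBoundedUnder_of_eventually_ge (a := 0) <| by
      filter_upwards [hφ₀.eventually hpos, hpos_succ] with n h1 h2 using (div_pos h2 h1).le)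
    hS_le
  linarith

end RetardedEquation

theorem stmt_4_general {m : ℕ} [NeZero m] (p : Fin m → ℤ → ℝ) (τ : Fin m → ℤ → ℤ)
    (hp : ∀ i : Fin m, ∀ n : ℤ, 0 ≤ n → 0 ≤ p i n)
    (hτ : ∀ i : Fin m, ∀ n : ℤ, 0 ≤ n → τ i n ≤ n - 1)
    (hτlim : ∀ i : Fin m, Filter.Tendsto (τ i) Filter.atTop Filter.atTop)
    (α : ℝ)
    (hα : α = Finset.univ.inf' Finset.univ_nonempty (fun i : Fin m =>
        Filter.liminf (fun n : ℤ => ∑ j ∈ Finset.Ico (phii τ i n) n, p i j) Filter.atTop))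
    (hα0 : 0 < α)
    (r : ℕ)
    (hcond : 1 - (1 - α - Real.sqrt (1 - 2 * α - α ^ 2)) / 2 <
      Filter.limsup (fun n : ℤ =>
        ∑ j ∈ Finset.Icc (phi τ n) n, ∑ i : Fin m, p i j * (aR p τ r (phi τ n) (τ i j))⁻¹)
      Filter.atTop)
    (x : ℤ → ℝ)
    (hxeq : ∀ n : ℤ, 0 ≤ n → x (n + 1) - x n + ∑ i : Fin m, p i n * x (τ i n) = 0) :
    (¬ ∃ N : ℤ, ∀ n ≥ N, 0 < x n) ∧ (¬ ∃ N : ℤ, ∀ n ≥ N, x n < 0) := by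
  have hxeq_neg : ∀ n, 0 ≤ n → -x (n + 1) - -x n + ∑ i, p i n * -x (τ i n) = 0 := fun n hn => by
    simp only [mul_neg, sum_neg_distrib]
    linarith [hxeq n hn]
  refine ⟨fun hpos => ?_, fun hneg => ?_⟩
  · exact not_eventually_pos hp hτ hτlim hα hα0 hcond hxeq (eventually_atTop.2 hpos)
  · exact not_eventually_pos hp hτ hτlim hα hα0 hcond hxeq_neg
      (eventually_atTop.2 (hneg.imp fun N hN n hn => neg_pos.2 (hN n hn)))

/-- Theorem 2.5: if `τ_i(n) → ∞`, `∑_i p_i(n) < 1` for `n ≥ 0`,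
`α = min_i liminf_{n→∞} ∑_{j=φ_i(n)}^{n-1} p_i(j)` satisfies `0 < α ≤ 1/e`, and for some
`r ∈ ℕ`, `limsup_{n→∞} ∑_{j=φ(n)}^{n} ∑_i p_i(j) a_r(φ(n),τ_i(j))⁻¹ >
1 - (1 - α - √(1 - 2α - α²))/2`, then every solution of the retarded equation oscillates. -/
theorem stmt_4 {m : ℕ} [NeZero m] (p : Fin m → ℤ → ℝ) (τ : Fin m → ℤ → ℤ)
    (hp : ∀ i : Fin m, ∀ n : ℤ, 0 ≤ n → 0 ≤ p i n)
    (hτ : ∀ i : Fin m, ∀ n : ℤ, 0 ≤ n → τ i n ≤ n - 1)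
    (hτlim : ∀ i : Fin m, Filter.Tendsto (τ i) Filter.atTop Filter.atTop)
    (hsum : ∀ n : ℤ, 0 ≤ n → ∑ i : Fin m, p i n < 1)
    (α : ℝ)
    (hα : α = Finset.univ.inf' Finset.univ_nonempty (fun i : Fin m =>
        Filter.liminf (fun n : ℤ => ∑ j ∈ Finset.Ico (phii τ i n) n, p i j) Filter.atTop))
    (hα0 : 0 < α) (hα1 : α ≤ 1 / Real.exp 1)
    (r : ℕ)
    (hcond : 1 - (1 - α - Real.sqrt (1 - 2 * α - α ^ 2)) / 2 <
      Filter.limsup (fun n : ℤ =>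
        ∑ j ∈ Finset.Icc (phi τ n) n, ∑ i : Fin m, p i j * (aR p τ r (phi τ n) (τ i j))⁻¹)
      Filter.atTop)
    (x : ℤ → ℝ)
    (hxeq : ∀ n : ℤ, 0 ≤ n → x (n + 1) - x n + ∑ i : Fin m, p i n * x (τ i n) = 0) :
    (¬ ∃ N : ℤ, ∀ n ≥ N, 0 < x n) ∧ (¬ ∃ N : ℤ, ∀ n ≥ N, x n < 0) :=
  stmt_4_general p τ hp hτ hτlim α hα hα0 r hcond x hxeq
end

section
/- Assume that for each 1 ≤ i ≤ m there exists a positive integer M_i such that n − τ_i(n) ≤ M_i for all n ≥ 0, and that for each k = 1, …, m, liminf_{n→∞} Σ_{i=1}^m Σ_{j=τ_k(n)}^{n−1} p_i(j) > (M_k/(M_k+1))^{M_k+1}. Then every solution of (E_R) oscillates. -/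
/-!
An eventually positive solution is eventually nonincreasing, so eventually
`r * x n ≤ x (τ i n)` holds with `r = 1`. Given such a ratio `r`, on a window `[τ k n, n)` the
equation gives `x (j + 1) ≤ (1 - r Q j) x j` with `Q j = ∑ i, p i j`, all factors being positive.
AM-GM over the window, padded with factors `1` up to `M k` factors, yields
`x n ≤ (1 - r α / M k) ^ M k * x (τ k n)` and `r α < M k` as soon as the window sum of `Q`
exceeds `α`. Since `M (1 - t) t ^ M ≤ (M / (M + 1)) ^ (M + 1)`, a window sum
`α > (M / (M + 1)) ^ (M + 1)` improves the ratio from `r` to `r + δ` for a fixed `δ > 0`.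
Iterating makes `r` unbounded, contradicting `r α < M k`. Negative solutions are handled by
`x ↦ -x`.
-/

open Finset Filter

theorem prod_le_sum_div_card_pow {ι : Type*} (s : Finset ι) {z : ι → ℝ}
    (hz : ∀ j ∈ s, 0 ≤ z j) : ∏ j ∈ s, z j ≤ ((∑ j ∈ s, z j) / #s) ^ #s := by
  rcases s.eq_empty_or_nonempty with rfl | hs
  · simp
  have hmean := Real.geom_mean_le_arith_mean s (fun _ ↦ 1) z (fun _ _ ↦ zero_le_one)
    (by simpa using hs.card_pos) hz
  simp only [Real.rpow_one, sum_const, nsmul_eq_mul, mul_one, one_mul] at hmean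
  calc ∏ j ∈ s, z j = ((∏ j ∈ s, z j) ^ ((#s : ℝ)⁻¹)) ^ #s :=
        (Real.rpow_inv_natCast_pow (prod_nonneg hz) hs.card_pos.ne').symm
    _ ≤ _ := pow_le_pow_left₀ (by have := prod_nonneg hz; positivity) hmean _

theorem pow_mul_pow_le_add_div_pow {u v : ℝ} (hu : 0 ≤ u) (hv : 0 ≤ v) (a b : ℕ) :
    u ^ a * v ^ b ≤ ((a * u + b * v) / (a + b)) ^ (a + b) := by
  rcases Nat.eq_zero_or_pos (a + b) with hab | hab
  · simp [Nat.eq_zero_of_add_eq_zero_right hab, Nat.eq_zero_of_add_eq_zero_left hab]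
  have hab' : (0 : ℝ) < a + b := by exact_mod_cast hab
  have hmean := Real.geom_mean_le_arith_mean2_weighted (w₁ := a / (a + b)) (w₂ := b / (a + b))
    (by positivity) (by positivity) hu hv (by field_simp)
  have hroot : ∀ {y : ℝ} (c : ℕ), 0 ≤ y →
      (y ^ ((c : ℝ) / (a + b))) ^ (a + b) = y ^ c := by
    intro y c hy
    rw [← Real.rpow_natCast, ← Real.rpow_mul hy, Nat.cast_add, div_mul_cancel₀ _ hab'.ne',
      Real.rpow_natCast]
  calc u ^ a * v ^ b = (u ^ ((a : ℝ) / (a + b)) * v ^ ((b : ℝ) / (a + b))) ^ (a + b) := by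
        rw [mul_pow, hroot a hu, hroot b hv]
    _ ≤ _ := by
        refine pow_le_pow_left₀ (by positivity) (hmean.trans_eq ?_) _
        ring

theorem prod_le_sum_add_div_pow {ι : Type*} (s : Finset ι) {z : ι → ℝ}
    (hz : ∀ j ∈ s, 0 ≤ z j) {M : ℕ} (hsM : #s ≤ M) :
    ∏ j ∈ s, z j ≤ ((∑ j ∈ s, z j + (M - #s)) / M) ^ M := by
  rcases s.eq_empty_or_nonempty with rfl | hs
  · rcases M.eq_zero_or_pos with rfl | hM
    · simp
    · simp [div_self (Nat.cast_ne_zero.mpr hM.ne' : (M : ℝ) ≠ 0)]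
  have hmean := pow_mul_pow_le_add_div_pow (div_nonneg (sum_nonneg hz) (Nat.cast_nonneg #s))
    zero_le_one #s (M - #s)
  rw [one_pow, mul_one, Nat.add_sub_cancel' hsM, mul_div_cancel₀ _ (by simpa using hs.ne_empty),
    Nat.cast_sub hsM, mul_one, add_sub_cancel] at hmean
  exact (prod_le_sum_div_card_pow s hz).trans hmean

theorem mul_one_sub_mul_pow_le (L : ℕ) {t : ℝ} (ht0 : 0 ≤ t) (ht1 : t ≤ 1) :
    L * (1 - t) * t ^ L ≤ ((L : ℝ) / (L + 1)) ^ (L + 1) := by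
  have hmean := pow_mul_pow_le_add_div_pow ht0 (mul_nonneg L.cast_nonneg (sub_nonneg.2 ht1)) L 1
  rw [pow_one, mul_comm] at hmean
  convert hmean using 3 <;> push_cast <;> ring

theorem add_one_sub_div_mul_pow_le_one {M : ℕ} (hM : 0 < M) {r α : ℝ} (hr : 0 ≤ r)
    (hrα : r * α ≤ M) (hα : ((M : ℝ) / (M + 1)) ^ (M + 1) ≤ α) :
    (r + (1 - ((M : ℝ) / (M + 1)) ^ (M + 1) / α)) * (1 - r * α / M) ^ M ≤ 1 := by
  set c : ℝ := ((M : ℝ) / (M + 1)) ^ (M + 1)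
  set t : ℝ := 1 - r * α / M
  have hM' : (0 : ℝ) < M := by exact_mod_cast hM
  have hα0 : 0 < α := lt_of_lt_of_le (by positivity) hα
  have ht0 : 0 ≤ t := by rw [sub_nonneg, div_le_one hM']; exact hrα
  have ht1 : t ≤ 1 := sub_le_self _ (by positivity)
  have hr_eq : r = M * (1 - t) / α := by simp only [t]; field_simp; ring
  have hmain : r * t ^ M ≤ c / α := by
    rw [hr_eq, div_mul_eq_mul_div]
    exact div_le_div_of_nonneg_right (mul_one_sub_mul_pow_le M ht0 ht1) hα0.le
  have hδ : (1 - c / α) * t ^ M ≤ 1 - c / α :=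
    mul_le_of_le_one_right (by rw [sub_nonneg, div_le_one hα0]; exact hα) (pow_le_one₀ ht0 ht1)
  linarith [add_mul r (1 - c / α) (t ^ M)]

theorem le_prod_Ico_mul_of_succ_le {x z : ℤ → ℝ} {a b : ℤ} (hab : a ≤ b)
    (hz : ∀ j ∈ Ico a b, 0 ≤ z j) (hstep : ∀ j ∈ Ico a b, x (j + 1) ≤ z j * x j) :
    x b ≤ (∏ j ∈ Ico a b, z j) * x a := by
  induction b, hab using Int.leInduction with
  | base => simp
  | succ b hab ih =>
    have hb : b ∈ Ico a (b + 1) := by simp [hab]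
    have hsub : Ico a b ⊆ Ico a (b + 1) := Ico_subset_Ico_right (by omega)
    have hIco : Ico a (b + 1) = insert b (Ico a b) := by
      ext j; simp only [mem_Ico, mem_insert]; omega
    rw [hIco, prod_insert (by simp), mul_assoc]
    exact (hstep b hb).trans (mul_le_mul_of_nonneg_left
      (ih (fun j hj ↦ hz j (hsub hj)) (fun j hj ↦ hstep j (hsub hj))) (hz b hb))

theorem exists_lt_eventually_le_of_lt_liminf {ι : Type*} {l : Filter ι} {f : ι → ℝ} {c : ℝ}
    (hc : 0 ≤ c) (h : c < liminf f l) : ∃ a, c < a ∧ ∀ᶠ n in l, a ≤ f n := by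
  rw [liminf_eq] at h
  -- `sSup ∅ = 0` in `ℝ`, which `0 ≤ c < liminf f l` excludes
  have hne : {a | ∀ᶠ n in l, a ≤ f n}.Nonempty := by
    by_contra hempty
    rw [Set.not_nonempty_iff_eq_empty.1 hempty, Real.sSup_empty] at h
    exact hc.not_gt h
  obtain ⟨a, ha, hca⟩ := exists_lt_of_lt_csSup hne h
  exact ⟨a, hca, ha⟩

theorem Filter.Eventually.forall_ge_of_sub_le {P : ℤ → Prop} {d : ℤ → ℤ} {M : ℤ}
    (h : ∀ᶠ j in atTop, P j) (hd : ∀ n, 0 ≤ n → n - d n ≤ M) :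
    ∀ᶠ n in atTop, ∀ j, d n ≤ j → P j := by
  obtain ⟨N, hN⟩ := eventually_atTop.1 h
  filter_upwards [eventually_ge_atTop 0, eventually_ge_atTop (N + M)] with n hn0 hn j hj
  have := hd n hn0
  exact hN j (by omega)

def IsRetardedSolution {m : ℕ} (p : Fin m → ℤ → ℝ) (τ : Fin m → ℤ → ℤ) (x : ℤ → ℝ) : Prop :=
  ∀ n : ℤ, 0 ≤ n → x (n + 1) - x n + ∑ i : Fin m, p i n * x (τ i n) = 0

namespace IsRetardedSolution

variable {m : ℕ} {p : Fin m → ℤ → ℝ} {τ : Fin m → ℤ → ℤ} {x : ℤ → ℝ}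

theorem neg (hx : IsRetardedSolution p τ x) : IsRetardedSolution p τ (-x) := by
  intro n hn
  simp only [Pi.neg_apply, mul_neg, sum_neg_distrib]
  linarith [hx n hn]

theorem succ_le_of_mul_le (hx : IsRetardedSolution p τ x) (hp : ∀ i n, 0 ≤ n → 0 ≤ p i n)
    {r : ℝ} {j : ℤ} (hj : 0 ≤ j) (hratio : ∀ i, r * x j ≤ x (τ i j)) :
    x (j + 1) ≤ (1 - r * ∑ i, p i j) * x j := by
  have hsum : ∑ i, p i j * (r * x j) ≤ ∑ i, p i j * x (τ i j) :=
    sum_le_sum fun i _ ↦ mul_le_mul_of_nonneg_left (hratio i) (hp i j hj)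
  have hlhs : ∑ i, p i j * (r * x j) = r * (∑ i, p i j) * x j := by
    rw [mul_assoc, sum_mul, mul_sum]; exact sum_congr rfl fun i _ ↦ by ring
  linarith [hx j hj]

theorem mul_le_of_window (hx : IsRetardedSolution p τ x) (hp : ∀ i n, 0 ≤ n → 0 ≤ p i n)
    {M : ℕ} {a n : ℤ} (ha : 0 ≤ a) (han : a < n) (hnM : n - a ≤ M)
    (hpos : ∀ j ∈ Icc a n, 0 < x j) {r α : ℝ} (hr : 0 ≤ r)
    (hratio : ∀ j ∈ Ico a n, ∀ i, r * x j ≤ x (τ i j))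
    (hα : α ≤ ∑ i, ∑ j ∈ Ico a n, p i j) (hcα : ((M : ℝ) / (M + 1)) ^ (M + 1) ≤ α) :
    r * α < M ∧ (r + (1 - ((M : ℝ) / (M + 1)) ^ (M + 1) / α)) * x n ≤ x a := by
  set S := ∑ j ∈ Ico a n, ∑ i, p i j
  set z : ℤ → ℝ := fun j ↦ 1 - r * ∑ i, p i j
  have hM : 0 < M := by omega
  have hM' : (0 : ℝ) < M := by exact_mod_cast hM
  have hS : α ≤ S := hα.trans_eq sum_comm
  have hstep : ∀ j ∈ Ico a n, x (j + 1) ≤ z j * x j := fun j hj ↦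
    hx.succ_le_of_mul_le hp (ha.trans (mem_Ico.1 hj).1) (hratio j hj)
  have hz : ∀ j ∈ Ico a n, 0 < z j := fun j hj ↦ by
    have hj' := mem_Ico.1 hj
    have := (hpos (j + 1) (mem_Icc.2 ⟨by omega, by omega⟩)).trans_le (hstep j hj)
    exact (pos_iff_pos_of_mul_pos this).2 (hpos j (mem_Icc.2 ⟨hj'.1, hj'.2.le⟩))
  have hcard : (#(Ico a n) : ℝ) ≤ M := by rw [Int.card_Ico]; exact_mod_cast (by omega : _ ≤ M)
  have hsum_z : ∑ j ∈ Ico a n, z j = #(Ico a n) - r * S := by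
    simp only [z, sum_sub_distrib, sum_const, nsmul_eq_mul, mul_one, S, mul_sum]
  -- the factors of the product are positive, which bounds `r * S` by the window length
  have hrS : r * S < M := by
    have := sum_pos hz (nonempty_Ico.2 han)
    linarith
  have hrα : r * α < M := (mul_le_mul_of_nonneg_left hS hr).trans_lt hrS
  refine ⟨hrα, ?_⟩
  have hprod : ∏ j ∈ Ico a n, z j ≤ (1 - r * α / M) ^ M := by
    refine (prod_le_sum_add_div_pow _ (fun j hj ↦ (hz j hj).le) (by exact_mod_cast hcard)).trans
      (pow_le_pow_left₀ ?_ ?_ M)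
    · rw [hsum_z]; apply div_nonneg <;> linarith
    · rw [hsum_z, one_sub_div hM'.ne']
      gcongr
      linarith [mul_le_mul_of_nonneg_left hS hr]
  have hα0 : 0 < α := lt_of_lt_of_le (by positivity) hcα
  have hδ : 0 ≤ r + (1 - ((M : ℝ) / (M + 1)) ^ (M + 1) / α) := by
    have := (div_le_one hα0).2 hcα
    linarith
  calc (r + (1 - ((M : ℝ) / (M + 1)) ^ (M + 1) / α)) * x n
      ≤ (r + (1 - ((M : ℝ) / (M + 1)) ^ (M + 1) / α)) * ((1 - r * α / M) ^ M * x a) := by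
        refine mul_le_mul_of_nonneg_left ?_ hδ
        exact (le_prod_Ico_mul_of_succ_le han.le (fun j hj ↦ (hz j hj).le) hstep).trans
          (mul_le_mul_of_nonneg_right hprod (hpos a (left_mem_Icc.2 han.le)).le)
    _ ≤ x a := by
        rw [← mul_assoc]
        refine mul_le_of_le_one_left (hpos a (left_mem_Icc.2 han.le)).le ?_
        exact add_one_sub_div_mul_pow_le_one hM hr hrα.le hcα

theorem eventually_add_mul_le (hx : IsRetardedSolution p τ x)
    (hp : ∀ i n, 0 ≤ n → 0 ≤ p i n) (hτ : ∀ i n, 0 ≤ n → τ i n ≤ n - 1) {k : Fin m} {M : ℕ}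
    (hM : ∀ n, 0 ≤ n → n - τ k n ≤ M) (hpos : ∀ᶠ n in atTop, 0 < x n) {r α : ℝ} (hr : 0 ≤ r)
    (hratio : ∀ᶠ n in atTop, ∀ i, r * x n ≤ x (τ i n))
    (hα : ∀ᶠ n in atTop, α ≤ ∑ i, ∑ j ∈ Ico (τ k n) n, p i j)
    (hcα : ((M : ℝ) / (M + 1)) ^ (M + 1) ≤ α) :
    r * α < M ∧
      ∀ᶠ n in atTop, (r + (1 - ((M : ℝ) / (M + 1)) ^ (M + 1) / α)) * x n ≤ x (τ k n) := by
  have hwindow := ((eventually_ge_atTop 0).and (hpos.and hratio)).forall_ge_of_sub_le hM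
  have key : ∀ᶠ n in atTop, r * α < M ∧
      (r + (1 - ((M : ℝ) / (M + 1)) ^ (M + 1) / α)) * x n ≤ x (τ k n) := by
    filter_upwards [eventually_ge_atTop 0, hwindow, hα] with n hn hwin hαn
    have hτn := hτ k n hn
    have hMn := hM n hn
    exact hx.mul_le_of_window hp (hwin _ le_rfl).1 (by omega) hMn
      (fun j hj ↦ (hwin j (mem_Icc.1 hj).1).2.1) hr
      (fun j hj ↦ (hwin j (mem_Ico.1 hj).1).2.2) hαn hcα
  obtain ⟨n, hn⟩ := key.exists
  exact ⟨hn.1, key.mono fun _ h ↦ h.2⟩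

theorem eventually_le_comp (hx : IsRetardedSolution p τ x)
    (hp : ∀ i n, 0 ≤ n → 0 ≤ p i n) (hτ : ∀ i n, 0 ≤ n → τ i n ≤ n - 1) {M : Fin m → ℤ}
    (hM : ∀ i n, 0 ≤ n → n - τ i n ≤ M i) (hpos : ∀ᶠ n in atTop, 0 < x n) :
    ∀ᶠ n in atTop, ∀ i, x n ≤ x (τ i n) := by
  have hsucc : ∀ᶠ n in atTop, x (n + 1) ≤ x n := by
    have hdelay := eventually_all.2 fun i ↦ (hpos.forall_ge_of_sub_le (hM i))
    filter_upwards [eventually_ge_atTop 0, hdelay] with n hn hdn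
    simpa using hx.succ_le_of_mul_le hp (r := 0) hn fun i ↦ by simpa using (hdn i _ le_rfl).le
  obtain ⟨N, hN⟩ := eventually_atTop.1 hsucc
  have hanti : AntitoneOn x (Set.Ici N) :=
    antitoneOn_of_succ_le Set.ordConnected_Ici fun a _ ha _ ↦ by
      rw [Order.succ_eq_add_one]; exact hN a ha
  refine eventually_all.2 fun i ↦ ?_
  filter_upwards [eventually_ge_atTop 0, (eventually_ge_atTop N).forall_ge_of_sub_le (hM i)]
    with n hn hNn
  have := hτ i n hn
  exact hanti (hNn _ le_rfl) (hNn n (by omega)) (by omega)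

theorem not_eventually_pos (hx : IsRetardedSolution p τ x) (hm : 0 < m)
    (hp : ∀ i n, 0 ≤ n → 0 ≤ p i n) (hτ : ∀ i n, 0 ≤ n → τ i n ≤ n - 1)
    {M : Fin m → ℕ} (hM : ∀ i n, 0 ≤ n → n - τ i n ≤ M i)
    (hcond : ∀ k, ((M k : ℝ) / (M k + 1)) ^ (M k + 1) <
      liminf (fun n ↦ ∑ i, ∑ j ∈ Ico (τ k n) n, p i j) atTop) :
    ¬ ∀ᶠ n in atTop, 0 < x n := by
  intro hpos
  choose α hcα hα using fun k ↦ exists_lt_eventually_le_of_lt_liminf (by positivity) (hcond k)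
  have hne : (univ : Finset (Fin m)).Nonempty := univ_nonempty_iff.2 ⟨⟨0, hm⟩⟩
  set δ := univ.inf' hne fun k ↦ 1 - ((M k : ℝ) / (M k + 1)) ^ (M k + 1) / α k
  have hδ : 0 < δ := (lt_inf'_iff hne).2 fun k _ ↦
    sub_pos.2 ((div_lt_one (lt_of_le_of_lt (by positivity) (hcα k))).2 (hcα k))
  have hstep : ∀ r : ℝ, 0 ≤ r → (∀ᶠ n in atTop, ∀ i, r * x n ≤ x (τ i n)) →
      (∀ k, r * α k < M k) ∧ ∀ᶠ n in atTop, ∀ i, (r + δ) * x n ≤ x (τ i n) := by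
    intro r hr hratio
    have h k := hx.eventually_add_mul_le hp hτ (hM k) hpos hr hratio (hα k) (hcα k).le
    refine ⟨fun k ↦ (h k).1, eventually_all.2 fun k ↦ ?_⟩
    filter_upwards [(h k).2, hpos] with n hn hxn
    exact (mul_le_mul_of_nonneg_right (by gcongr; exact inf'_le _ (mem_univ k)) hxn.le).trans hn
  have hiter : ∀ j : ℕ, ∀ᶠ n in atTop, ∀ i, (1 + j * δ) * x n ≤ x (τ i n) := by
    intro j
    induction j with
    | zero => simpa using hx.eventually_le_comp hp hτ hM hpos
    | succ j ih =>
      rw [Nat.cast_succ, add_one_mul, ← add_assoc]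
      exact (hstep _ (by positivity) ih).2
  set k : Fin m := ⟨0, hm⟩
  have hαk : 0 < α k := lt_of_le_of_lt (by positivity) (hcα k)
  obtain ⟨j, hj⟩ := exists_nat_gt (M k / (δ * α k))
  have hbound := (hstep _ (by positivity) (hiter j)).1 k
  rw [div_lt_iff₀ (by positivity)] at hj
  nlinarith

end IsRetardedSolution

theorem stmt_9_general {m : ℕ} (hm : 0 < m) (p : Fin m → ℤ → ℝ) (τ : Fin m → ℤ → ℤ)
    (hp : ∀ i : Fin m, ∀ n : ℤ, 0 ≤ n → 0 ≤ p i n)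
    (hτ : ∀ i : Fin m, ∀ n : ℤ, 0 ≤ n → τ i n ≤ n - 1)
    (M : Fin m → ℕ)
    (hM : ∀ i : Fin m, ∀ n : ℤ, 0 ≤ n → n - τ i n ≤ (M i : ℤ))
    (hcond : ∀ k : Fin m,
      ((M k : ℝ) / (M k + 1)) ^ (M k + 1) <
        Filter.liminf (fun n : ℤ => ∑ i : Fin m, ∑ j ∈ Finset.Ico (τ k n) n, p i j)
          Filter.atTop)
    (x : ℤ → ℝ)
    (hxeq : ∀ n : ℤ, 0 ≤ n → x (n + 1) - x n + ∑ i : Fin m, p i n * x (τ i n) = 0) :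
    (¬ ∃ N : ℤ, ∀ n ≥ N, 0 < x n) ∧ (¬ ∃ N : ℤ, ∀ n ≥ N, x n < 0) := by
  have hx : IsRetardedSolution p τ x := hxeq
  refine ⟨fun hpos ↦ hx.not_eventually_pos hm hp hτ hM hcond (eventually_atTop.2 hpos),
    fun hneg ↦ hx.neg.not_eventually_pos hm hp hτ hM hcond ?_⟩
  obtain ⟨N, hN⟩ := hneg
  exact eventually_atTop.2 ⟨N, fun n hn ↦ neg_pos.2 (hN n hn)⟩

/-- Theorem 3.3: if each delay is bounded, `n - τ_i(n) ≤ M_i` with `M_i` a positive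
integer, and for each `k`, `liminf_{n→∞} ∑_{i=1}^m ∑_{j=τ_k(n)}^{n-1} p_i(j) >
(M_k/(M_k+1))^{M_k+1}`, then every solution of the retarded equation oscillates. -/
theorem stmt_9 {m : ℕ} (hm : 0 < m) (p : Fin m → ℤ → ℝ) (τ : Fin m → ℤ → ℤ)
    (hp : ∀ i : Fin m, ∀ n : ℤ, 0 ≤ n → 0 ≤ p i n)
    (hτ : ∀ i : Fin m, ∀ n : ℤ, 0 ≤ n → τ i n ≤ n - 1)
    (M : Fin m → ℕ) (hMpos : ∀ i : Fin m, 0 < M i)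
    (hM : ∀ i : Fin m, ∀ n : ℤ, 0 ≤ n → n - τ i n ≤ (M i : ℤ))
    (hcond : ∀ k : Fin m,
      ((M k : ℝ) / (M k + 1)) ^ (M k + 1) <
        Filter.liminf (fun n : ℤ => ∑ i : Fin m, ∑ j ∈ Finset.Ico (τ k n) n, p i j)
          Filter.atTop)
    (x : ℤ → ℝ)
    (hxeq : ∀ n : ℤ, 0 ≤ n → x (n + 1) - x n + ∑ i : Fin m, p i n * x (τ i n) = 0) :
    (¬ ∃ N : ℤ, ∀ n ≥ N, 0 < x n) ∧ (¬ ∃ N : ℤ, ∀ n ≥ N, x n < 0) :=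
  stmt_9_general hm p τ hp hτ M hM hcond x hxeq
end
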